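/- For every N ≥ 2, T > 0, ε > 0 and c ≥ 0, there exists exactly one solution of the N-periodic Riccati system on [0,T]: that is, there exists a unique family (φ^i)_{i=0,…,N−1} of differentiable functions [0,T] → ℝ such that, extending it N-periodically in the index i, (d/dt)φ^i(t) = Σ_{j=0}^{N−1} φ^j(t) φ^{N+i−j}(t) − ε^i holds for all i ∈ {0,…,N−1} and all t ∈ [0,T], with terminal conditions φ^0(T) = c, φ^1(T) = −c, φ^i(T) = 0 for 2 ≤ i ≤ N−1, where ε^0 = ε, ε^1 = −ε, ε^i = 0 for 2 ≤ i ≤ N−1. -/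

import Mathlib

open scoped BigOperators

/-- The sequence ε^i with integer index. -/
noncomputable def epsZ (ε : ℝ) : ℤ → ℝ := fun i => if i = 0 then ε else if i = 1 then -ε else 0

/-- `φ` is a solution of the `N`-periodic Riccati system on `[0,T]`. -/
def IsPerRiccatiSol (T ε c : ℝ) (N : ℕ) (φ : ℤ → ℝ → ℝ) : Prop :=
  (∀ i : ℤ, φ (i + (N : ℤ)) = φ i) ∧
  (∀ i : ℕ, i < N → ∀ t ∈ Set.Icc (0:ℝ) T,
    HasDerivWithinAt (φ (i : ℤ))
      ((∑ j ∈ Finset.range N, φ (j : ℤ) t * φ ((N : ℤ) + (i : ℤ) - (j : ℤ)) t) - epsZ ε (i : ℤ))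
      (Set.Icc (0:ℝ) T) t) ∧
  φ 0 T = c ∧ φ 1 T = -c ∧ ∀ i : ℕ, 2 ≤ i → i < N → φ (i : ℤ) T = 0

/-- The discrete Fourier transform of `(φ^j)_{j=0,…,N-1}` at frequency `k`:
`\hatφ^k(t) := ∑_{j=0}^{N-1} φ^j(t) exp(−2π√(−1) jk/N)`. -/
noncomputable def dft (N : ℕ) (φ : ℤ → ℝ → ℝ) (k : ℕ) (t : ℝ) : ℂ :=
  ∑ j ∈ Finset.range N,
    (φ (j : ℤ) t : ℂ) * Complex.exp (-(2 * Real.pi * Complex.I * (j : ℂ) * (k : ℂ)) / (N : ℂ))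

/-!
Indexing by `ZMod N`, the right-hand side is `φ ⋆ φ - ε` with `⋆` the cyclic convolution, so the
discrete Fourier transform decouples the system into the scalar Riccati equations
`ψ' = ψ² - r²`, `ψ(T) = (c/ε) r²`, where `r² = 𝓕ε(k) = ε (1 - e^{-2πik/N})`. Each is solved by
`ψ = -Q'/Q` with `Q(t) = cosh (r (T - t)) + (c/ε) r sinh (r (T - t))`, and `Q` has no zero for
`t ≤ T`: `r²` lies in the closed right half-plane, so its principal square root `r` has positive
real part unless it is `0`. Since `ψ_{-k} = conj ψ_k`, the inverse transform of the modes is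
real. Uniqueness holds because the vector field is polynomial, hence locally Lipschitz.
-/

namespace Complex

open ComplexConjugate

lemma norm_sub_one_le_norm_add_one {w : ℂ} (hw : 0 ≤ w.re) : ‖w - 1‖ ≤ ‖w + 1‖ := by
  rw [← sq_le_sq₀ (norm_nonneg _) (norm_nonneg _), Complex.sq_norm, Complex.sq_norm,
    normSq_apply, normSq_apply]
  simp only [sub_re, add_re, sub_im, add_im, one_re, one_im]
  nlinarith

/-- `2 eᶻ (cosh z + w sinh z) = e²ᶻ (w + 1) - (w - 1)`, while `‖e²ᶻ‖ > 1 ≥ ‖w - 1‖ / ‖w + 1‖`. -/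
lemma cosh_add_mul_sinh_ne_zero {z w : ℂ} (hz : 0 < z.re) (hw : 0 ≤ w.re) :
    cosh z + w * sinh z ≠ 0 := by
  intro h
  have hexp : exp (2 * z) * (w + 1) = w - 1 := by
    have h2z : exp (2 * z) = exp z * exp z := by rw [two_mul, exp_add]
    have h0 : exp z * exp (-z) = 1 := by rw [← exp_add, add_neg_cancel, exp_zero]
    linear_combination (w + 1) * h2z + 2 * exp z * h - exp z * two_cosh z
      - w * exp z * two_sinh z + (w - 1) * h0
  have hw1 : 0 < ‖w + 1‖ :=
    (show 0 < (w + 1).re by rw [add_re, one_re]; linarith).trans_le (re_le_norm _)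
  have hle : ‖exp (2 * z)‖ * ‖w + 1‖ ≤ 1 * ‖w + 1‖ := by
    rw [← norm_mul, hexp, one_mul]
    exact norm_sub_one_le_norm_add_one hw
  have := le_of_mul_le_mul_right hle hw1
  rw [norm_exp, Real.exp_le_one_iff, mul_re, re_ofNat, im_ofNat, zero_mul, sub_zero] at this
  linarith

lemma sqrt_sq (z : ℂ) : Complex.sqrt z ^ 2 = z := cpow_ofNat_inv_pow z 2

lemma sqrt_eq_zero_or_re_pos {z : ℂ} (hz : 0 ≤ z.re) :
    Complex.sqrt z = 0 ∨ 0 < (Complex.sqrt z).re := by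
  rcases eq_or_ne z 0 with rfl | h0
  · exact Or.inl Complex.sqrt_zero
  right
  rw [Complex.sqrt, cpow_inv_two_re]
  positivity

lemma conj_sqrt {z : ℂ} (hz : 0 ≤ z.re) : conj (Complex.sqrt z) = Complex.sqrt (conj z) := by
  have harg : (conj z).arg ≠ Real.pi := by
    rw [Ne, arg_eq_pi_iff, conj_re]
    exact fun h => h.1.not_ge hz
  have := cpow_conj (conj z) 2⁻¹ harg
  simp only [conj_conj, map_inv₀, map_ofNat] at this
  rw [Complex.sqrt, Complex.sqrt, this]

end Complex

open Set Metric in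
theorem ODE_solution_unique_Icc_of_contDiff {E : Type*} [NormedAddCommGroup E]
    [NormedSpace ℝ E] [ProperSpace E] {F : E → E} (hF : ContDiff ℝ 1 F) {u v : ℝ → E} {a b : ℝ}
    (hu : ∀ t ∈ Icc a b, HasDerivWithinAt u (F (u t)) (Icc a b) t)
    (hv : ∀ t ∈ Icc a b, HasDerivWithinAt v (F (v t)) (Icc a b) t) (hb : u b = v b) :
    EqOn u v (Icc a b) := by
  have hu_cont : ContinuousOn u (Icc a b) := fun t ht => (hu t ht).continuousWithinAt
  have hv_cont : ContinuousOn v (Icc a b) := fun t ht => (hv t ht).continuousWithinAt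
  obtain ⟨Cu, hCu⟩ := isCompact_Icc.exists_bound_of_continuousOn hu_cont
  obtain ⟨Cv, hCv⟩ := isCompact_Icc.exists_bound_of_continuousOn hv_cont
  obtain ⟨K, hK⟩ := hF.contDiffOn.exists_lipschitzOnWith one_ne_zero
    (convex_closedBall 0 (max Cu Cv)) (isCompact_closedBall 0 (max Cu Cv))
  have hleft : ∀ w : ℝ → E, (∀ t ∈ Icc a b, HasDerivWithinAt w (F (w t)) (Icc a b) t) →
      ∀ t ∈ Ioc a b, HasDerivWithinAt w (F (w t)) (Iic t) t := fun w hw t ht =>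
    (hw t (Ioc_subset_Icc_self ht)).mono_of_mem_nhdsWithin (Icc_mem_nhdsLE_of_mem ht)
  refine ODE_solution_unique_of_mem_Icc_left (v := fun _ => F)
    (s := fun _ => closedBall 0 (max Cu Cv)) (fun _ _ => hK) hu_cont (hleft u hu) (fun t ht => ?_)
    hv_cont (hleft v hv) (fun t ht => ?_) hb
  · exact mem_closedBall_zero_iff.2 ((hCu t (Ioc_subset_Icc_self ht)).trans (le_max_left _ _))
  · exact mem_closedBall_zero_iff.2 ((hCv t (Ioc_subset_Icc_self ht)).trans (le_max_right _ _))

namespace PeriodicRiccati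

open Complex ComplexConjugate Set ZMod

section ScalarRiccati

variable (r a : ℂ) (T : ℝ)

noncomputable def riccatiDenom (t : ℝ) : ℂ :=
  cosh (r * (T - t : ℝ)) + a * r * sinh (r * (T - t : ℝ))

noncomputable def riccatiNumer (t : ℝ) : ℂ :=
  a * r ^ 2 * cosh (r * (T - t : ℝ)) + r * sinh (r * (T - t : ℝ))

noncomputable def riccatiSol (t : ℝ) : ℂ := riccatiNumer r a T t / riccatiDenom r a T t

lemma hasDerivAt_mul_ofReal_sub (t : ℝ) :
    HasDerivAt (fun s : ℝ => r * (T - s : ℝ)) (-r) t := by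
  simpa using (((hasDerivAt_id t).const_sub T).ofReal_comp).const_mul r

lemma hasDerivAt_riccatiDenom (t : ℝ) :
    HasDerivAt (riccatiDenom r a T) (-riccatiNumer r a T t) t := by
  have h := hasDerivAt_mul_ofReal_sub r T t
  refine (((hasDerivAt_cosh _).comp t h).add
    (((hasDerivAt_sinh _).comp t h).const_mul (a * r))).congr_deriv ?_
  simp only [riccatiNumer]
  ring

lemma hasDerivAt_riccatiNumer (t : ℝ) :
    HasDerivAt (riccatiNumer r a T) (-(r ^ 2 * riccatiDenom r a T t)) t := by
  have h := hasDerivAt_mul_ofReal_sub r T t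
  refine ((((hasDerivAt_cosh _).comp t h).const_mul (a * r ^ 2)).add
    (((hasDerivAt_sinh _).comp t h).const_mul r)).congr_deriv ?_
  simp only [riccatiDenom]
  ring

lemma hasDerivAt_riccatiSol {t : ℝ} (h : riccatiDenom r a T t ≠ 0) :
    HasDerivAt (riccatiSol r a T) (riccatiSol r a T t ^ 2 - r ^ 2) t := by
  refine ((hasDerivAt_riccatiNumer r a T t).div (hasDerivAt_riccatiDenom r a T t) h).congr_deriv ?_
  simp only [riccatiSol]
  field_simp
  ring

lemma riccatiSol_self : riccatiSol r a T T = a * r ^ 2 := by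
  simp [riccatiSol, riccatiNumer, riccatiDenom]

lemma conj_riccatiSol (t : ℝ) :
    conj (riccatiSol r a T t) = riccatiSol (conj r) (conj a) T t := by
  simp only [riccatiSol, riccatiNumer, riccatiDenom, map_div₀, map_add, map_mul, map_pow,
    ← cosh_conj, ← sinh_conj, conj_ofReal]

end ScalarRiccati

lemma riccatiDenom_ne_zero {r : ℂ} (hr : r = 0 ∨ 0 < r.re) {a : ℝ} (ha : 0 ≤ a) {T t : ℝ}
    (ht : t ≤ T) : riccatiDenom r a T t ≠ 0 := by
  rcases ht.eq_or_lt with rfl | ht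
  · simp [riccatiDenom]
  rcases hr with rfl | hr
  · simp [riccatiDenom]
  refine cosh_add_mul_sinh_ne_zero ?_ ?_
  · rw [re_mul_ofReal]
    exact mul_pos hr (sub_pos.2 ht)
  · rw [re_ofReal_mul]
    exact mul_nonneg ha hr.le

section CyclicConvolution

variable {N : ℕ} [NeZero N]

def cyclicConv {R : Type*} [CommRing R] (x y : ZMod N → R) : ZMod N → R :=
  fun i => ∑ j, x j * y (i - j)

lemma map_cyclicConv {R S : Type*} [CommRing R] [CommRing S] (f : R →+* S) (x y : ZMod N → R) :
    f ∘ cyclicConv x y = cyclicConv (f ∘ x) (f ∘ y) := by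
  ext i
  simp [cyclicConv, map_sum, map_mul]

lemma dft_cyclicConv (x y : ZMod N → ℂ) : 𝓕 (cyclicConv x y) = 𝓕 x * 𝓕 y := by
  ext k
  rw [Pi.mul_apply, dft_apply, dft_apply, dft_apply, Finset.sum_mul_sum]
  simp only [cyclicConv, smul_eq_mul, Finset.mul_sum]
  rw [Finset.sum_comm]
  refine Finset.sum_congr rfl fun j _ => ?_
  refine Fintype.sum_equiv (Equiv.subRight j) _ _ fun i => ?_
  have : stdAddChar (-(i * k)) = stdAddChar (-(j * k)) * stdAddChar (-((i - j) * k)) := by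
    rw [← AddChar.map_add_eq_mul]
    ring_nf
  rw [Equiv.subRight_apply, this]
  ring

lemma invDFT_mul (f g : ZMod N → ℂ) : 𝓕⁻ (f * g) = cyclicConv (𝓕⁻ f) (𝓕⁻ g) := by
  rw [LinearEquiv.symm_apply_eq, dft_cyclicConv, LinearEquiv.apply_symm_apply,
    LinearEquiv.apply_symm_apply]

lemma conj_invDFT_apply {Ψ : ZMod N → ℂ} (hΨ : ∀ k, conj (Ψ k) = Ψ (-k)) (i : ZMod N) :
    conj (𝓕⁻ Ψ i) = 𝓕⁻ Ψ i := by
  simp only [invDFT_apply, smul_eq_mul, map_mul, map_inv₀, map_natCast, map_sum, hΨ,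
    ← AddChar.map_neg_eq_conj]
  congr 1
  rw [← Equiv.sum_comp (Equiv.neg _)]
  simp [neg_mul]

lemma contDiff_cyclicConv_sub {n : WithTop ℕ∞} (e : ZMod N → ℝ) :
    ContDiff ℝ n (fun x : ZMod N → ℝ => cyclicConv x x - e) := by
  unfold cyclicConv
  fun_prop

end CyclicConvolution

section PeriodicFamilies

variable {N : ℕ}

noncomputable def epsVec (ε : ℝ) : ZMod N → ℝ := fun m => epsZ ε m.val

lemma epsVec_zero (ε : ℝ) : epsVec ε (0 : ZMod N) = ε := by
  simp [epsVec, epsZ]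

lemma epsVec_one (hN : 1 < N) (ε : ℝ) : epsVec ε (1 : ZMod N) = -ε := by
  simp [epsVec, epsZ, val_one_eq_one_mod, Nat.mod_eq_of_lt hN]

lemma epsVec_mul (a ε : ℝ) : epsVec (a * ε) = a • epsVec (N := N) ε := by
  ext m
  simp only [epsVec, epsZ, Pi.smul_apply, smul_eq_mul]
  split_ifs <;> ring

variable [NeZero N]

lemma sum_range_natCast {M : Type*} [AddCommMonoid M] (f : ZMod N → M) :
    ∑ j ∈ Finset.range N, f j = ∑ m, f m :=
  Finset.sum_nbij' (fun j => (j : ZMod N)) ZMod.val (by simp) (by simp [ZMod.val_lt])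
    (fun j hj => ZMod.val_natCast_of_lt (Finset.mem_range.1 hj)) (fun m _ => natCast_zmod_val m)
    (fun _ _ => rfl)

lemma forall_zmod_iff {P : ZMod N → Prop} : (∀ m, P m) ↔ ∀ i < N, P i :=
  ⟨fun h i _ => h i, fun h m => natCast_zmod_val m ▸ h m.val (ZMod.val_lt m)⟩

lemma eq_val_intCast_of_periodic {α : Type*} {φ : ℤ → α} (hper : ∀ i, φ (i + N) = φ i)
    (n : ℤ) : φ n = φ (n : ZMod N).val := by
  rw [ZMod.val_intCast, Int.emod_def, mul_comm, ← smul_eq_mul, Function.Periodic.sub_zsmul_eq hper]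

lemma sum_range_sub_epsZ_eq_cyclicConv_sub (u : ZMod N → ℝ) (ε : ℝ) {i : ℕ} (hi : i < N) :
    (∑ j ∈ Finset.range N, u ((j : ℤ) : ZMod N) * u (((N : ℤ) + i - j : ℤ) : ZMod N)) - epsZ ε i =
      (cyclicConv u u - epsVec ε : ZMod N → ℝ) i := by
  simp only [Int.cast_natCast, Int.cast_sub, Int.cast_add, natCast_self, zero_add,
    sum_range_natCast (fun j => u j * u (i - j)), Pi.sub_apply, cyclicConv, epsVec,
    val_natCast_of_lt hi]

lemma epsVec_of_ne {m : ZMod N} (h0 : m ≠ 0) (h1 : m ≠ 1) (ε : ℝ) : epsVec ε m = 0 := by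
  have h0' : (m.val : ℤ) ≠ 0 := by exact_mod_cast (val_eq_zero m).not.2 h0
  have h1' : (m.val : ℤ) ≠ 1 := fun h => h1 (by
    rw [← natCast_zmod_val m, show m.val = 1 by exact_mod_cast h, Nat.cast_one])
  rw [epsVec, epsZ, if_neg h0', if_neg h1']

lemma epsVec_eq_iff (hN : 1 < N) {x : ZMod N → ℝ} {c : ℝ} : x = epsVec c ↔
    x 0 = c ∧ x 1 = -c ∧ ∀ i : ℕ, 2 ≤ i → i < N → x i = 0 := by
  constructor
  · rintro rfl
    refine ⟨epsVec_zero c, epsVec_one hN c, fun i h2 hi => epsVec_of_ne ?_ ?_ c⟩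
    · rw [Ne, ← val_eq_zero, val_natCast_of_lt hi]
      omega
    · rw [Ne, ← val_eq_one hN, val_natCast_of_lt hi]
      omega
  · rintro ⟨h0, h1, h2⟩
    funext m
    by_cases hm0 : m = 0
    · rw [hm0, h0, epsVec_zero]
    by_cases hm1 : m = 1
    · rw [hm1, h1, epsVec_one hN]
    rw [epsVec_of_ne hm0 hm1, ← natCast_zmod_val m]
    rw [← val_eq_zero] at hm0
    rw [← val_eq_one hN] at hm1
    exact h2 _ (by omega) (val_lt m)

theorem isPerRiccatiSol_iff (hN : 1 < N) {T ε c : ℝ} (u : ℝ → ZMod N → ℝ) :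
    IsPerRiccatiSol T ε c N (fun n t => u t n) ↔
      (∀ t ∈ Set.Icc 0 T,
        HasDerivWithinAt u (cyclicConv (u t) (u t) - epsVec ε) (Set.Icc 0 T) t) ∧
      u T = epsVec c := by
  simp only [IsPerRiccatiSol, epsVec_eq_iff hN, hasDerivWithinAt_pi]
  constructor
  · rintro ⟨-, hode, h0, h1, h2⟩
    refine ⟨fun t ht => forall_zmod_iff.2 fun i hi => ?_, by simpa using h0, by simpa using h1,
      fun i h2' hi => by simpa using h2 i h2' hi⟩
    have := hode i hi t ht
    rw [sum_range_sub_epsZ_eq_cyclicConv_sub _ _ hi] at this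
    simpa only [Int.cast_natCast] using this
  · rintro ⟨hode, h0, h1, h2⟩
    refine ⟨fun i => by simp, fun i hi t ht => ?_, by simpa using h0, by simpa using h1,
      fun i h2' hi => by simpa using h2 i h2' hi⟩
    rw [sum_range_sub_epsZ_eq_cyclicConv_sub _ _ hi]
    simpa only [Int.cast_natCast] using hode t ht i

end PeriodicFamilies

section Existence

variable {N : ℕ} [NeZero N]

lemma dft_epsVec (hN : 1 < N) (ε : ℝ) (k : ZMod N) :
    𝓕 (ofReal ∘ epsVec ε) k = ε * (1 - stdAddChar (-k)) := by
  have : Fact (1 < N) := ⟨hN⟩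
  rw [dft_apply, Fintype.sum_eq_add 0 1 zero_ne_one fun m hm => by
    simp [epsVec_of_ne hm.1 hm.2]]
  simp only [zero_mul, one_mul, neg_zero, AddChar.map_zero_eq_one, Function.comp_apply,
    epsVec_zero, epsVec_one hN, smul_eq_mul, ofReal_neg]
  ring

lemma re_dft_epsVec_nonneg (hN : 1 < N) {ε : ℝ} (hε : 0 ≤ ε) (k : ZMod N) :
    0 ≤ (𝓕 (ofReal ∘ epsVec ε) k).re := by
  rw [dft_epsVec hN, re_ofReal_mul, sub_re, one_re]
  exact mul_nonneg hε (sub_nonneg.2 ((re_le_norm _).trans (AddChar.norm_apply _ _).le))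

lemma conj_dft_epsVec (hN : 1 < N) (ε : ℝ) (k : ZMod N) :
    conj (𝓕 (ofReal ∘ epsVec ε) k) = 𝓕 (ofReal ∘ epsVec ε) (-k) := by
  rw [dft_epsVec hN, dft_epsVec hN, map_mul, conj_ofReal, map_sub, map_one,
    ← AddChar.map_neg_eq_conj]

variable (N) in
noncomputable def fourierMode (T ε c : ℝ) (k : ZMod N) (t : ℝ) : ℂ :=
  riccatiSol (Complex.sqrt (𝓕 (ofReal ∘ epsVec ε) k)) (c / ε : ℝ) T t

variable (N) in
noncomputable def fourierSol (T ε c t : ℝ) : ZMod N → ℂ :=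
  𝓕⁻ fun k => fourierMode N T ε c k t

lemma conj_fourierSol (hN : 1 < N) (T : ℝ) {ε : ℝ} (hε : 0 ≤ ε) (c t : ℝ) (i : ZMod N) :
    conj (fourierSol N T ε c t i) = fourierSol N T ε c t i := by
  refine conj_invDFT_apply (fun k => ?_) i
  rw [fourierMode, fourierMode, conj_riccatiSol, conj_ofReal,
    conj_sqrt (re_dft_epsVec_nonneg hN hε k), conj_dft_epsVec hN]

lemma hasDerivAt_fourierSol (hN : 1 < N) {T ε c : ℝ} (hε : 0 < ε) (hc : 0 ≤ c) {t : ℝ}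
    (ht : t ≤ T) :
    HasDerivAt (fourierSol N T ε c)
      (cyclicConv (fourierSol N T ε c t) (fourierSol N T ε c t) - ofReal ∘ epsVec ε) t := by
  have hmodes : HasDerivAt (fun s k => fourierMode N T ε c k s)
      ((fun k => fourierMode N T ε c k t) * (fun k => fourierMode N T ε c k t) -
        𝓕 (ofReal ∘ epsVec ε)) t := by
    refine hasDerivAt_pi.2 fun k => ?_
    have hr := sqrt_eq_zero_or_re_pos (re_dft_epsVec_nonneg hN hε.le k)
    have := hasDerivAt_riccatiSol _ _ T (riccatiDenom_ne_zero hr (div_nonneg hc hε.le) ht)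
    rwa [sqrt_sq, sq] at this
  have hL := (((ZMod.dft (N := N) (E := ℂ)).symm.toContinuousLinearEquiv :
    (ZMod N → ℂ) →L[ℂ] (ZMod N → ℂ)).restrictScalars ℝ).hasFDerivAt.comp_hasDerivAt t hmodes
  refine hL.congr_deriv ?_
  simp only [ContinuousLinearMap.coe_restrictScalars', ContinuousLinearEquiv.coe_coe,
    LinearEquiv.coe_toContinuousLinearEquiv', map_sub, invDFT_mul, LinearEquiv.symm_apply_apply]
  rfl

lemma fourierSol_self (T : ℝ) {ε : ℝ} (hε : ε ≠ 0) (c : ℝ) :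
    fourierSol N T ε c T = ofReal ∘ epsVec c := by
  have hmodes : (fun k => fourierMode N T ε c k T) = ((c / ε : ℝ) : ℂ) • 𝓕 (ofReal ∘ epsVec ε) := by
    ext k
    simp [fourierMode, riccatiSol_self, sqrt_sq]
  have hc : epsVec (N := N) c = (c / ε) • epsVec ε := by rw [← epsVec_mul, div_mul_cancel₀ c hε]
  rw [fourierSol, hmodes, _root_.map_smul, LinearEquiv.symm_apply_apply, hc]
  ext m
  simp

theorem exists_solution (hN : 1 < N) {T ε c : ℝ} (hε : 0 < ε) (hc : 0 ≤ c) :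
    ∃ u : ℝ → ZMod N → ℝ, (∀ t ∈ Icc 0 T,
        HasDerivWithinAt u (cyclicConv (u t) (u t) - epsVec ε) (Icc 0 T) t) ∧
      u T = epsVec c := by
  let u : ℝ → ZMod N → ℝ := fun t i => (fourierSol N T ε c t i).re
  have hreal : ∀ t, fourierSol N T ε c t = ofReal ∘ u t := fun t => funext fun i =>
    (conj_eq_iff_re.1 (conj_fourierSol hN T hε.le c t i)).symm
  refine ⟨u, fun t ht => HasDerivAt.hasDerivWithinAt (hasDerivAt_pi.2 fun i => ?_), ?_⟩
  · have hΦ := hasDerivAt_pi.1 (hasDerivAt_fourierSol hN hε hc ht.2) i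
    refine (reCLM.hasFDerivAt.comp_hasDerivAt t hΦ).congr_deriv ?_
    have hconv : ofReal ∘ cyclicConv (u t) (u t) = cyclicConv (ofReal ∘ u t) (ofReal ∘ u t) :=
      map_cyclicConv ofRealHom _ _
    rw [hreal t, ← hconv, ← ofReal_comp_sub]
    rfl
  · ext i
    simp [u, fourierSol_self T hε.ne' c]

end Existence

end PeriodicRiccati

open PeriodicRiccati

theorem periodic_riccati_exists_unique_general
    (T ε c : ℝ) (hε : 0 < ε) (hc : 0 ≤ c)
    (N : ℕ) (hN : 2 ≤ N) :
    ∃ φ : ℤ → ℝ → ℝ, IsPerRiccatiSol T ε c N φ ∧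
      ∀ ψ : ℤ → ℝ → ℝ, IsPerRiccatiSol T ε c N ψ →
        ∀ i : ℕ, i < N → ∀ t ∈ Set.Icc (0:ℝ) T, ψ (i : ℤ) t = φ (i : ℤ) t := by
  have : NeZero N := ⟨by omega⟩
  obtain ⟨u, hu⟩ := exists_solution (T := T) hN hε hc
  refine ⟨fun n t => u t n, (isPerRiccatiSol_iff hN u).2 hu, fun ψ hψ i _ t ht => ?_⟩
  let v : ℝ → ZMod N → ℝ := fun t m => ψ m.val t
  have hψv : ψ = fun (n : ℤ) t => v t n := funext fun n => eq_val_intCast_of_periodic hψ.1 n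
  rw [hψv] at hψ ⊢
  obtain ⟨hode, hterm⟩ := (isPerRiccatiSol_iff hN _).1 hψ
  have := ODE_solution_unique_Icc_of_contDiff (contDiff_cyclicConv_sub (epsVec ε)) hode hu.1
    (hterm.trans hu.2.symm) ht
  simpa using congrFun this i

/-- For every `N ≥ 2`, `T > 0`, `ε > 0` and `c ≥ 0`, the `N`-periodic Riccati system has a
solution on `[0,T]`, and any two solutions agree on `[0,T]` (in each of the components
`i = 0,…,N-1`, hence, by periodicity, in all components). -/
theorem periodic_riccati_exists_unique
    (T ε c : ℝ) (hT : 0 < T) (hε : 0 < ε) (hc : 0 ≤ c)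
    (N : ℕ) (hN : 2 ≤ N) :
    ∃ φ : ℤ → ℝ → ℝ, IsPerRiccatiSol T ε c N φ ∧
      ∀ ψ : ℤ → ℝ → ℝ, IsPerRiccatiSol T ε c N ψ →
        ∀ i : ℕ, i < N → ∀ t ∈ Set.Icc (0:ℝ) T, ψ (i : ℤ) t = φ (i : ℤ) t :=
  periodic_riccati_exists_unique_general T ε c hε hc N hN
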